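/- Identification of the nested counterfactual: in a finite SFM, P(T_{x1, W_{x0}} = t | X = x0) = Σ_{z,w} P(T = t | Z=z, W=w, X=x1) · P(W=w | Z=z, X=x0) · P(Z=z | X=x0), given the conditional independences T_{x1,w} ⊥ W_{x0} | Z, X; T_{x1,w} ⊥ W | Z, X; T_{x1,w} ⊥ X | Z, and consistency. -/
import Mathlib

open Classical in
/-- Probability of an event on a finite space with pmf `P`. -/
noncomputable def prob {Ω : Type*} [Fintype Ω] (P : Ω → ℝ) (A : Set Ω) : ℝ :=
  ∑ ω, if ω ∈ A then P ω else 0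

/-- Conditional probability `P(A | B)`. -/
noncomputable def cprob {Ω : Type*} [Fintype Ω] (P : Ω → ℝ) (A B : Set Ω) : ℝ :=
  prob P (A ∩ B) / prob P B


open Classical

lemma prob_mono {Ω : Type*} [Fintype Ω] (P : Ω → ℝ) (hP0 : ∀ ω, 0 ≤ P ω)
    {A B : Set Ω} (h : A ⊆ B) : prob P A ≤ prob P B := by
  unfold prob
  refine Finset.sum_le_sum fun ω _ => ?_
  by_cases hA : ω ∈ A
  · simp [hA, h hA]
  · simp only [hA, if_false]
    split <;> simp [hP0]

lemma prob_split {Ω Zv : Type*} [Fintype Ω] [Fintype Zv] (P : Ω → ℝ) (Z : Ω → Zv)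
    (A : Set Ω) : prob P A = ∑ z, prob P ({ω | Z ω = z} ∩ A) := by
  unfold prob
  rw [Finset.sum_comm]
  refine Finset.sum_congr rfl fun ω _ => ?_
  by_cases h : ω ∈ A <;> simp [Set.mem_inter_iff, h, Finset.sum_ite_eq]

lemma cprob_split {Ω Zv : Type*} [Fintype Ω] [Fintype Zv] (P : Ω → ℝ) (Z : Ω → Zv)
    (A B : Set Ω) : cprob P A B = ∑ z, cprob P (A ∩ {ω | Z ω = z}) B := by
  unfold cprob
  rw [prob_split P Z (A ∩ B), Finset.sum_div]
  refine Finset.sum_congr rfl fun z _ => ?_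
  congr 1
  congr 1
  ext ω; simp [Set.mem_inter_iff]; tauto

lemma cprob_chain {Ω : Type*} [Fintype Ω] (P : Ω → ℝ) (A C B : Set Ω)
    (h : prob P (C ∩ B) ≠ 0) :
    cprob P (A ∩ C) B = cprob P A (C ∩ B) * cprob P C B := by
  unfold cprob
  rw [Set.inter_assoc, div_mul_div_comm, mul_comm (prob P (A ∩ (C ∩ B))),
    mul_div_mul_left _ _ h]

lemma cprob_congr {Ω : Type*} [Fintype Ω] (P : Ω → ℝ) {A A' B : Set Ω}
    (h : A ∩ B = A' ∩ B) : cprob P A B = cprob P A' B := by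
  unfold cprob; rw [h]

/-- Identification of the nested counterfactual `P(T_{x1, W_{x0}} = t | X = x0)`
in the Standard Fairness Model. -/
theorem nested_counterfactual_identification
    {Ω Xv Zv Wv Tv : Type*} [Fintype Ω] [Fintype Zv] [Fintype Wv]
    (P : Ω → ℝ) (hP0 : ∀ ω, 0 ≤ P ω) (hP1 : ∑ ω, P ω = 1)
    (X : Ω → Xv) (Z : Ω → Zv) (W : Ω → Wv) (T : Ω → Tv)
    (Tpo : Xv → Wv → Ω → Tv) (Wpo : Xv → Ω → Wv)
    (x0 x1 : Xv) (t : Tv)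
    -- all conditioning events have positive probability
    (hpos : ∀ z w x, 0 < prob P {ω | Z ω = z ∧ W ω = w ∧ X ω = x})
    -- (i) counterfactual un-nesting
    (hunnest : cprob P {ω | Tpo x1 (Wpo x0 ω) ω = t} {ω | X ω = x0}
      = ∑ w, cprob P {ω | Tpo x1 w ω = t ∧ Wpo x0 ω = w} {ω | X ω = x0})
    -- (ii) T_{x1,w} ⊥ W_{x0} | Z, X
    (hci1 : ∀ w w' z x,
      cprob P {ω | Tpo x1 w ω = t ∧ Wpo x0 ω = w'} {ω | Z ω = z ∧ X ω = x}
      = cprob P {ω | Tpo x1 w ω = t} {ω | Z ω = z ∧ X ω = x}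
        * cprob P {ω | Wpo x0 ω = w'} {ω | Z ω = z ∧ X ω = x})
    -- (iii) consistency
    (hconsW : ∀ ω, X ω = x0 → Wpo x0 ω = W ω)
    (hconsT : ∀ ω w, X ω = x1 → W ω = w → Tpo x1 w ω = T ω)
    -- (iv) T_{x1,w} ⊥ W | Z, X
    (hci2 : ∀ w w' z x,
      cprob P {ω | Tpo x1 w ω = t} {ω | Z ω = z ∧ W ω = w' ∧ X ω = x}
      = cprob P {ω | Tpo x1 w ω = t} {ω | Z ω = z ∧ X ω = x})
    -- (v) T_{x1,w} ⊥ X | Z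
    (hci3 : ∀ w z x x',
      cprob P {ω | Tpo x1 w ω = t} {ω | Z ω = z ∧ X ω = x}
      = cprob P {ω | Tpo x1 w ω = t} {ω | Z ω = z ∧ X ω = x'}) :
    cprob P {ω | Tpo x1 (Wpo x0 ω) ω = t} {ω | X ω = x0}
      = ∑ z, ∑ w,
          cprob P {ω | T ω = t} {ω | Z ω = z ∧ W ω = w ∧ X ω = x1}
            * cprob P {ω | W ω = w} {ω | Z ω = z ∧ X ω = x0}
            * cprob P {ω | Z ω = z} {ω | X ω = x0} := by
  have hne : Nonempty Ω := by
    by_contra h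
    rw [not_nonempty_iff] at h
    simp at hP1
  obtain ⟨ω₀⟩ := hne
  have hposZX : ∀ z x, (0:ℝ) < prob P {ω | Z ω = z ∧ X ω = x} := fun z x =>
    lt_of_lt_of_le (hpos z (W ω₀) x)
      (prob_mono P hP0 (fun ω hω => ⟨hω.1, hω.2.2⟩))
  have key : ∀ w, cprob P {ω | Tpo x1 w ω = t ∧ Wpo x0 ω = w} {ω | X ω = x0}
      = ∑ z, cprob P {ω | T ω = t} {ω | Z ω = z ∧ W ω = w ∧ X ω = x1}
          * cprob P {ω | W ω = w} {ω | Z ω = z ∧ X ω = x0}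
          * cprob P {ω | Z ω = z} {ω | X ω = x0} := by
    intro w
    rw [cprob_split P Z]
    refine Finset.sum_congr rfl fun z _ => ?_
    have hZX : {ω | Z ω = z} ∩ {ω | X ω = x0} = {ω | Z ω = z ∧ X ω = x0} := by
      ext ω; simp [Set.mem_inter_iff]
    rw [cprob_chain P _ _ _ (by rw [hZX]; exact (hposZX z x0).ne'), hZX]
    congr 1
    rw [hci1 w w z x0]
    congr 1
    · rw [hci3 w z x0 x1, ← hci2 w w z x1]
      refine cprob_congr P ?_
      ext ω
      simp only [Set.mem_inter_iff, Set.mem_setOf_eq]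
      constructor
      · rintro ⟨ht, h⟩; exact ⟨by rw [← hconsT ω w h.2.2 h.2.1]; exact ht, h⟩
      · rintro ⟨ht, h⟩; exact ⟨by rw [hconsT ω w h.2.2 h.2.1]; exact ht, h⟩
    · refine cprob_congr P ?_
      ext ω
      simp only [Set.mem_inter_iff, Set.mem_setOf_eq]
      constructor
      · rintro ⟨hw, h⟩; exact ⟨by rw [← hconsW ω h.2]; exact hw, h⟩
      · rintro ⟨hw, h⟩; exact ⟨by rw [hconsW ω h.2]; exact hw, h⟩
  rw [hunnest, Finset.sum_congr rfl fun w _ => key w, Finset.sum_comm]
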